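/- For every complex number q with |q| < 1, θ₂(q)⁴ + θ₄(q)⁴ = θ₃(q)⁴, where θ₂(q) = 2·Σ_{n≥0} q^{(n+1/2)²}, θ₃(q) = Σ_{n∈ℤ} q^{n²} and θ₄(q) = Σ_{n∈ℤ} (−1)ⁿ q^{n²}. -/

import Mathlib

/-!
Write `θ₂(q) = q^{1/4} ∑_{n ∈ ℤ} q^{n² + n}` and `θ₄(q) = θ₃(-q)`, and expand all fourth powers
as sums over `ℤ⁴`. Then `θ₃(q)⁴ - θ₃(-q)⁴ = 2 ∑ q^{|m|²}` over the `m` with `|m|²` odd, while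
`θ₂(q)⁴ = ∑_v q^{∑ (vᵢ² + vᵢ) + 1}`. Reflecting `v₄ ↦ -1 - v₄` keeps `∑ (vᵢ² + vᵢ)` and flips the
parity of `∑ vᵢ`, so the latter sum is twice its part over `∑ vᵢ` even; there the Hadamard map
`v ↦ H (2v + 1) / 4` (with `H² = 4`) is a bijection onto `{m : |m|² odd}` satisfying
`|m|² = ∑ (vᵢ² + vᵢ) + 1`.
-/

/-- Jacobi theta function `θ₂(q) = 2 ∑_{n ≥ 0} q^{(n+1/2)²}` (principal powers). -/
noncomputable def theta2 (q : ℂ) : ℂ := 2 * ∑' n : ℕ, q ^ (((n : ℂ) + 1 / 2) ^ 2)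

/-- Jacobi theta function `θ₃(q) = ∑_{n ∈ ℤ} q^{n²}`. -/
noncomputable def theta3 (q : ℂ) : ℂ := ∑' n : ℤ, q ^ (n ^ 2)

/-- Jacobi theta function `θ₄(q) = ∑_{n ∈ ℤ} (−1)ⁿ q^{n²}`. -/
noncomputable def theta4 (q : ℂ) : ℂ := ∑' n : ℤ, (-1 : ℂ) ^ n * q ^ (n ^ 2)

local notation "ℤ⁴" => (ℤ × ℤ) × (ℤ × ℤ)

namespace JacobiIdentity

section Expansion

variable {R : Type*} [NormedRing R] [CompleteSpace R] {ι : Type*}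

theorem hasSum_sq_of_summable_norm {f : ι → R} (hf : Summable (‖f ·‖)) :
    HasSum (fun p : ι × ι => f p.1 * f p.2) ((∑' i, f i) ^ 2) := by
  rw [sq, tsum_mul_tsum_of_summable_norm hf hf]
  exact (summable_mul_of_summable_norm hf hf).hasSum

theorem hasSum_pow_four_of_summable_norm {f : ι → R} (hf : Summable (‖f ·‖)) :
    HasSum (fun v : (ι × ι) × (ι × ι) => f v.1.1 * f v.1.2 * (f v.2.1 * f v.2.2))
      ((∑' i, f i) ^ 4) := by
  rw [show 4 = 2 * 2 from rfl, pow_mul, ← (hasSum_sq_of_summable_norm hf).tsum_eq]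
  exact hasSum_sq_of_summable_norm (hf.mul_norm hf)

end Expansion

theorem summable_norm_zpow_of_abs_le {𝕜 : Type*} [NormedDivisionRing 𝕜] {q : 𝕜} (hq0 : q ≠ 0)
    (hq : ‖q‖ < 1) {e : ℤ → ℤ} (c : ℤ) (he : ∀ n, |n| ≤ e n + c) :
    Summable fun n => ‖q ^ e n‖ := by
  have hr0 : 0 < ‖q‖ := norm_pos_iff.2 hq0
  have hgeom : Summable fun n : ℤ => ‖q‖ ^ n.natAbs :=
    .of_nat_of_neg (by simpa using summable_geometric_of_lt_one hr0.le hq)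
      (by simpa using summable_geometric_of_lt_one hr0.le hq)
  refine (hgeom.mul_left (‖q‖ ^ (-c))).of_nonneg_of_le (fun n => norm_nonneg _) fun n => ?_
  rw [norm_zpow, ← zpow_natCast, Int.natCast_natAbs, ← zpow_add₀ hr0.ne']
  exact zpow_le_zpow_right_of_le_one₀ hr0 hq.le (by linarith [he n])

def sum4 (e : ℤ → ℤ) (v : ℤ⁴) : ℤ := e v.1.1 + e v.1.2 + (e v.2.1 + e v.2.2)

theorem hasSum_zpow_sum4 {𝕜 : Type*} [NormedField 𝕜] [CompleteSpace 𝕜] {q : 𝕜} (hq0 : q ≠ 0)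
    {e : ℤ → ℤ} (he : Summable fun n => ‖q ^ e n‖) :
    HasSum (fun v : ℤ⁴ => q ^ sum4 e v) ((∑' n, q ^ e n) ^ 4) := by
  simpa only [sum4, zpow_add₀ hq0] using hasSum_pow_four_of_summable_norm he

theorem HasSum.sub_neg_zpow {𝕜 : Type*} [NormedField 𝕜] {ι : Type*} {q a b : 𝕜} {e : ι → ℤ}
    (ha : HasSum (fun i => q ^ e i) a) (hb : HasSum (fun i => (-q) ^ e i) b) :
    a - b = 2 * ∑' i : {i // Odd (e i)}, q ^ e i := by
  have h : HasSum (fun i : {i // Odd (e i)} => 2 * q ^ e i) (a - b) := by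
    refine (hasSum_subtype_iff_indicator (f := fun i => 2 * q ^ e i)
      (s := {i | Odd (e i)})).2 ((ha.sub hb).congr_fun fun i => ?_)
    rcases Int.even_or_odd (e i) with he | ho
    · simp [he.neg_zpow, Int.not_odd_iff_even.2 he]
    · simp [ho.neg_zpow, Set.indicator_of_mem (s := {i | Odd (e i)}) ho, two_mul]
  rw [← tsum_mul_left, h.tsum_eq]

def reflectLast (v : ℤ⁴) : ℤ⁴ := (v.1, (v.2.1, -1 - v.2.2))

theorem reflectLast_involutive : Function.Involutive reflectLast := by
  rintro ⟨⟨a, b⟩, c, d⟩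
  simp [reflectLast]

theorem sum4_pronic_reflectLast (v : ℤ⁴) :
    sum4 (fun n => n ^ 2 + n) (reflectLast v) = sum4 (fun n => n ^ 2 + n) v := by
  simp only [sum4, reflectLast]
  ring

theorem even_sum4_id_iff_not_even_reflectLast (v : ℤ⁴) :
    Even (sum4 id v) ↔ ¬Even (sum4 id (reflectLast v)) := by
  simp only [sum4, reflectLast, id, ← Int.not_odd_iff_even, not_not, Int.odd_iff]
  omega

def reflectLastEquiv : {v : ℤ⁴ // Even (sum4 id v)} ≃ {v : ℤ⁴ // ¬Even (sum4 id v)} :=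
  reflectLast_involutive.toPerm.subtypeEquiv even_sum4_id_iff_not_even_reflectLast

/-- `H v / 2 + e₁ = H (2v + 1) / 4` for the Sylvester–Hadamard matrix `H`; the divisions are exact
when `∑ vᵢ` is even. -/
def hadamard (v : ℤ⁴) : ℤ⁴ :=
  (((v.1.1 + v.1.2 + v.2.1 + v.2.2 + 2) / 2, (v.1.1 + v.1.2 - v.2.1 - v.2.2) / 2),
   ((v.1.1 - v.1.2 + v.2.1 - v.2.2) / 2, (v.1.1 - v.1.2 - v.2.1 + v.2.2) / 2))

def hadamardInv (m : ℤ⁴) : ℤ⁴ :=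
  (((m.1.1 + m.1.2 + m.2.1 + m.2.2 - 1) / 2, (m.1.1 + m.1.2 - m.2.1 - m.2.2 - 1) / 2),
   ((m.1.1 - m.1.2 + m.2.1 - m.2.2 - 1) / 2, (m.1.1 - m.1.2 - m.2.1 + m.2.2 - 1) / 2))

theorem odd_sum4_sq_iff (m : ℤ⁴) : Odd (sum4 (· ^ 2) m) ↔ Odd (sum4 id m) := by
  simp [sum4, Int.odd_add, Int.even_add, Int.even_pow, Int.odd_pow]

theorem sum4_sq_hadamard {v : ℤ⁴} (hv : Even (sum4 id v)) :
    sum4 (· ^ 2) (hadamard v) = sum4 (fun n => n ^ 2 + n) v + 1 := by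
  obtain ⟨⟨a, b⟩, c, d⟩ := v
  obtain ⟨k, hk⟩ := hv
  simp only [sum4, id] at hk
  simp only [sum4, hadamard]
  generalize hx : (a + b + c + d + 2) / 2 = x
  generalize hy : (a + b - c - d) / 2 = y
  generalize hz : (a - b + c - d) / 2 = z
  generalize hw : (a - b - c + d) / 2 = w
  have h1 : 2 * x = a + b + c + d + 2 := by omega
  have h2 : 2 * y = a + b - c - d := by omega
  have h3 : 2 * z = a - b + c - d := by omega
  have h4 : 2 * w = a - b - c + d := by omega
  -- `|H v + 2 e₁|² = 4 |v|² + 4 ∑ vᵢ + 4`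
  refine mul_left_cancel₀ (four_ne_zero' ℤ) ?_
  linear_combination (2 * x + (a + b + c + d + 2)) * h1 + (2 * y + (a + b - c - d)) * h2 +
    (2 * z + (a - b + c - d)) * h3 + (2 * w + (a - b - c + d)) * h4

theorem odd_sum4_sq_hadamard {v : ℤ⁴} (hv : Even (sum4 id v)) :
    Odd (sum4 (· ^ 2) (hadamard v)) := by
  have hpronic : Even (sum4 (fun n => n ^ 2 + n) v) := by
    simp only [sum4, sq, ← mul_add_one]
    exact ((Int.even_mul_succ_self _).add (Int.even_mul_succ_self _)).add
      ((Int.even_mul_succ_self _).add (Int.even_mul_succ_self _))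
  rw [sum4_sq_hadamard hv]
  exact hpronic.add_one

theorem even_sum4_id_hadamardInv {m : ℤ⁴} (hm : Odd (sum4 (· ^ 2) m)) :
    Even (sum4 id (hadamardInv m)) := by
  rw [odd_sum4_sq_iff, Int.odd_iff] at hm
  rw [Int.even_iff]
  simp only [sum4, hadamardInv, id] at *
  omega

theorem hadamardInv_hadamard {v : ℤ⁴} (hv : Even (sum4 id v)) : hadamardInv (hadamard v) = v := by
  rw [Int.even_iff] at hv
  simp only [sum4, id, hadamard, hadamardInv, Prod.ext_iff] at *
  omega

theorem hadamard_hadamardInv {m : ℤ⁴} (hm : Odd (sum4 (· ^ 2) m)) :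
    hadamard (hadamardInv m) = m := by
  rw [odd_sum4_sq_iff, Int.odd_iff] at hm
  simp only [sum4, id, hadamard, hadamardInv, Prod.ext_iff] at *
  omega

def hadamardEquiv : {v : ℤ⁴ // Even (sum4 id v)} ≃ {m : ℤ⁴ // Odd (sum4 (· ^ 2) m)} where
  toFun v := ⟨hadamard v, odd_sum4_sq_hadamard v.2⟩
  invFun m := ⟨hadamardInv m, even_sum4_id_hadamardInv m.2⟩
  left_inv v := Subtype.ext (hadamardInv_hadamard v.2)
  right_inv m := Subtype.ext (hadamard_hadamardInv m.2)

theorem tsum_sum4_pronic_add_one {E : Type*} [NormedAddCommGroup E] [CompleteSpace E]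
    (g : ℤ → E) (hg : Summable fun v : ℤ⁴ => g (sum4 (fun n => n ^ 2 + n) v + 1)) :
    ∑' v : ℤ⁴, g (sum4 (fun n => n ^ 2 + n) v + 1) =
      2 • ∑' m : {m : ℤ⁴ // Odd (sum4 (· ^ 2) m)}, g (sum4 (· ^ 2) m) := by
  set f := fun v : ℤ⁴ => g (sum4 (fun n => n ^ 2 + n) v + 1)
  have hodd : ∑' v : {v : ℤ⁴ // ¬Even (sum4 id v)}, f v =
      ∑' v : {v : ℤ⁴ // Even (sum4 id v)}, f v := by
    rw [← reflectLastEquiv.tsum_eq]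
    exact tsum_congr fun v => congrArg (fun n => g (n + 1)) (sum4_pronic_reflectLast v.1)
  have heven : ∑' v : {v : ℤ⁴ // Even (sum4 id v)}, f v =
      ∑' m : {m : ℤ⁴ // Odd (sum4 (· ^ 2) m)}, g (sum4 (· ^ 2) m) := by
    rw [← hadamardEquiv.tsum_eq]
    exact tsum_congr fun v => by simp [f, hadamardEquiv, sum4_sq_hadamard v.2]
  calc ∑' v, f v
      = ∑' v : {v : ℤ⁴ // Even (sum4 id v)}, f v + ∑' v : {v : ℤ⁴ // ¬Even (sum4 id v)}, f v :=
        ((hg.subtype (· ∈ {v | Even (sum4 id v)})).tsum_add_tsum_compl (hg.subtype _)).symm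
    _ = _ := by rw [hodd, heven, two_smul]

section Theta

variable {q : ℂ}

theorem theta2_zero : theta2 0 = 0 := by
  have hne (n : ℕ) : ((n : ℂ) + 1 / 2) ^ 2 ≠ 0 := by
    refine pow_ne_zero 2 fun h => ?_
    have := congrArg Complex.re h
    norm_num at this
    linarith [n.cast_nonneg (α := ℝ)]
  rw [theta2, tsum_congr fun n => Complex.zero_cpow (hne n), tsum_zero, mul_zero]

theorem theta3_zero : theta3 0 = 1 := by
  rw [theta3, tsum_eq_single 0 fun n hn => zero_zpow _ (pow_ne_zero 2 hn)]
  simp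

theorem theta4_eq_theta3_neg : theta4 q = theta3 (-q) := by
  refine tsum_congr fun n => ?_
  rcases Int.even_or_odd n with h | h
  · rw [h.neg_one_zpow, one_mul, (h.pow_of_ne_zero two_ne_zero).neg_zpow]
  · rw [h.neg_one_zpow, (h.pow (n := 2)).neg_zpow, neg_one_mul]

theorem summable_norm_zpow_sq_add_self (hq0 : q ≠ 0) (hq : ‖q‖ < 1) :
    Summable fun n : ℤ => ‖q ^ (n ^ 2 + n)‖ :=
  summable_norm_zpow_of_abs_le hq0 hq 1 fun n => by cases abs_cases n <;> nlinarith

theorem theta2_eq_cpow_mul_tsum (hq0 : q ≠ 0) (hq : ‖q‖ < 1) :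
    theta2 q = q ^ (1 / 4 : ℂ) * ∑' n : ℤ, q ^ (n ^ 2 + n) := by
  have hterm (n : ℕ) : q ^ (((n : ℂ) + 1 / 2) ^ 2) = q ^ (1 / 4 : ℂ) * q ^ ((n : ℤ) ^ 2 + n) := by
    rw [← Complex.cpow_intCast, ← Complex.cpow_add _ _ hq0]
    push_cast
    ring_nf
  have hsymm (n : ℕ) : q ^ ((-((n : ℤ) + 1)) ^ 2 + -((n : ℤ) + 1)) = q ^ ((n : ℤ) ^ 2 + n) := by
    congr 1
    ring
  rw [theta2, tsum_congr hterm, tsum_mul_left,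
    ← tsum_nat_add_neg_add_one (summable_norm_zpow_sq_add_self hq0 hq).of_norm]
  simp only [hsymm, ← two_mul, tsum_mul_left]
  ring

theorem hasSum_theta2_pow_four (hq0 : q ≠ 0) (hq : ‖q‖ < 1) :
    HasSum (fun v : ℤ⁴ => q ^ (sum4 (fun n => n ^ 2 + n) v + 1)) (theta2 q ^ 4) := by
  have hquarter : (q ^ (1 / 4 : ℂ)) ^ 4 = q := by
    rw [← Complex.cpow_nat_mul]
    norm_num
  rw [theta2_eq_cpow_mul_tsum hq0 hq, mul_pow, hquarter]
  simpa only [zpow_add_one₀ hq0, mul_comm] using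
    (hasSum_zpow_sum4 hq0 (summable_norm_zpow_sq_add_self hq0 hq)).mul_left q

theorem hasSum_theta3_pow_four (hq0 : q ≠ 0) (hq : ‖q‖ < 1) :
    HasSum (fun m : ℤ⁴ => q ^ sum4 (· ^ 2) m) (theta3 q ^ 4) :=
  hasSum_zpow_sum4 hq0
    (summable_norm_zpow_of_abs_le hq0 hq 0 fun n => by simpa using Int.natAbs_le_self_sq n)

end Theta

end JacobiIdentity

open JacobiIdentity

/-- The Jacobi identity `θ₂⁴ + θ₄⁴ = θ₃⁴`. -/
theorem theta2_pow_four_add_theta4_pow_four (q : ℂ) (hq : ‖q‖ < 1) :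
    theta2 q ^ 4 + theta4 q ^ 4 = theta3 q ^ 4 := by
  rcases eq_or_ne q 0 with rfl | hq0
  · simp [theta2_zero, theta4_eq_theta3_neg, theta3_zero]
  have hθ₂ := hasSum_theta2_pow_four hq0 hq
  have hθ₃ := hasSum_theta3_pow_four hq0 hq
  have hθ₃neg := hasSum_theta3_pow_four (neg_ne_zero.2 hq0) (by rwa [norm_neg])
  rw [theta4_eq_theta3_neg, ← eq_sub_iff_add_eq, hθ₃.sub_neg_zpow hθ₃neg, ← hθ₂.tsum_eq,
    tsum_sum4_pronic_add_one _ hθ₂.summable, two_smul, two_mul]
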